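/- Let G be a countable discrete group. The following are equivalent: (1) G is amenable; (2) there exists a state τ on ℓ∞(G) such that for every Hilbert space H and every uniformly bounded map φ: G → B(H), there exists a positive definite map ψ: G → B(H) such that ⟨φ(x)* ψ(x) ξ, η⟩ = τ_y ⟨φ(x)* φ(xy) φ(y)* ξ, η⟩ for all x ∈ G and all ξ, η ∈ H (where τ is applied to the bounded function of the variable y). -/

import Mathlib

open scoped ComplexOrder

/-- `f : G → ℂ` is bounded, i.e. `f ∈ ℓ∞(G)`. -/
def IsBddFun {G : Type*} (f : G → ℂ) : Prop := ∃ C : ℝ, ∀ x, ‖f x‖ ≤ C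

/-- A state on `ℓ∞(G)`: a positive unital linear functional, encoded as a functional on
all functions `G → ℂ` whose linearity, positivity and unitality are imposed on bounded
functions. -/
structure LinftyState (G : Type*) where
  toFun : (G → ℂ) → ℂ
  map_add : ∀ f g : G → ℂ, IsBddFun f → IsBddFun g → toFun (f + g) = toFun f + toFun g
  map_smul : ∀ (c : ℂ) (f : G → ℂ), IsBddFun f → toFun (c • f) = c * toFun f
  pos : ∀ f : G → ℂ, IsBddFun f → (∀ x, 0 ≤ f x) → 0 ≤ toFun f
  unital : toFun (fun _ => (1 : ℂ)) = 1

/-- `G` is amenable: there is a left-invariant mean (state) on `ℓ∞(G)`. -/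
def Amenable (G : Type*) [Group G] : Prop :=
  ∃ τ : LinftyState G, ∀ (s : G) (f : G → ℂ), IsBddFun f →
    τ.toFun (fun x => f (s * x)) = τ.toFun f

/-- A map `φ : G → B(H)` is uniformly bounded. -/
def UnifBdd {G H : Type*} [NormedAddCommGroup H] [InnerProductSpace ℂ H]
    (φ : G → H →L[ℂ] H) : Prop := ∃ C : ℝ, ∀ x, ‖φ x‖ ≤ C

/-- A map `ψ : G → B(H)` is positive definite. -/
def PosDefMap {G : Type*} [Group G] {H : Type*} [NormedAddCommGroup H]
    [InnerProductSpace ℂ H] (ψ : G → H →L[ℂ] H) : Prop :=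
  ∀ (n : ℕ) (x : Fin n → G) (ξ : Fin n → H),
    0 ≤ ∑ i, ∑ j, (inner ℂ (ψ ((x i)⁻¹ * x j) (ξ j)) (ξ i) : ℂ)

/-!
An invariant mean `τ` averages `y ↦ φ(xy) φ(y)*` weakly into an operator `ψ(x)`, and invariance
turns the positive-definiteness sum of `ψ` into `τ_y ‖∑ᵢ φ(xᵢ⁻¹ y)* ξᵢ‖² ≥ 0`.

Conversely, for a scalar `φ = c` without zeros the identity pins down `ψ(x)` as the conjugate of
`τ_y (conj c(xy) c(y))`, and since a positive definite `ψ` is hermitian,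
`τ(conj c(s·) c) = conj τ(conj c(s⁻¹·) c)`. Taking `c = f + t` for large real `t` and comparing
the coefficients of `t`, then replacing `f` by `i f`, gives `τ(conj f(s·)) = conj (τ f)`,
which is left invariance.
-/

open scoped InnerProduct ComplexConjugate

namespace IsBddFun

variable {α G : Type*} {f g : G → ℂ}

lemma const (c : ℂ) : IsBddFun (fun _ : G => c) := ⟨‖c‖, fun _ => le_rfl⟩

lemma add (hf : IsBddFun f) (hg : IsBddFun g) : IsBddFun (fun y => f y + g y) := by
  obtain ⟨C, hC⟩ := hf
  obtain ⟨D, hD⟩ := hg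
  exact ⟨C + D, fun y => (norm_add_le _ _).trans (add_le_add (hC y) (hD y))⟩

lemma sub (hf : IsBddFun f) (hg : IsBddFun g) : IsBddFun (fun y => f y - g y) := by
  obtain ⟨C, hC⟩ := hf
  obtain ⟨D, hD⟩ := hg
  exact ⟨C + D, fun y => (norm_sub_le _ _).trans (add_le_add (hC y) (hD y))⟩

lemma mul (hf : IsBddFun f) (hg : IsBddFun g) : IsBddFun (fun y => f y * g y) := by
  obtain ⟨C, hC⟩ := hf
  obtain ⟨D, hD⟩ := hg
  refine ⟨max C 0 * max D 0, fun y => ?_⟩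
  rw [norm_mul]
  exact mul_le_mul ((hC y).trans (le_max_left _ _)) ((hD y).trans (le_max_left _ _))
    (norm_nonneg _) (le_max_right _ _)

lemma const_mul (c : ℂ) (hf : IsBddFun f) : IsBddFun (fun y => c * f y) := (const c).mul hf

lemma star (hf : IsBddFun f) : IsBddFun (fun y => conj (f y)) := by
  obtain ⟨C, hC⟩ := hf
  exact ⟨C, fun y => by simpa using hC y⟩

lemma comp (hf : IsBddFun f) (m : α → G) : IsBddFun (fun y => f (m y)) := by
  obtain ⟨C, hC⟩ := hf
  exact ⟨C, fun y => hC (m y)⟩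

lemma sum {ι : Type*} (s : Finset ι) {f : ι → G → ℂ} (h : ∀ i ∈ s, IsBddFun (f i)) :
    IsBddFun (fun y => ∑ i ∈ s, f i y) := by
  classical
  induction s using Finset.induction_on with
  | empty => exact ⟨0, by simp⟩
  | insert a s ha ih =>
    simp only [Finset.sum_insert ha]
    exact (h a (s.mem_insert_self a)).add (ih fun i hi => h i (Finset.mem_insert_of_mem hi))

end IsBddFun

open ContinuousLinearMap in
lemma norm_comp_adjoint_le {G H : Type*} [NormedAddCommGroup H] [InnerProductSpace ℂ H]
    [CompleteSpace H] {φ : G → H →L[ℂ] H} {C : ℝ} (hφ : ∀ x, ‖φ x‖ ≤ C) (a b : G) :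
    ‖φ a ∘L adjoint (φ b)‖ ≤ C * C := by
  refine (opNorm_comp_le _ _).trans
    (mul_le_mul (hφ a) ?_ (norm_nonneg _) ((norm_nonneg _).trans (hφ a)))
  rw [LinearIsometryEquiv.norm_map]
  exact hφ b

lemma norm_inner_apply_le_of_opNorm_le {H : Type*} [NormedAddCommGroup H]
    [InnerProductSpace ℂ H] {T : H →L[ℂ] H} {C : ℝ} (hT : ‖T‖ ≤ C) (ξ η : H) :
    ‖(inner ℂ (T ξ) η : ℂ)‖ ≤ C * ‖ξ‖ * ‖η‖ :=
  (norm_inner_le_norm _ _).trans <|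
    mul_le_mul_of_nonneg_right (T.le_of_opNorm_le hT ξ) (norm_nonneg η)

lemma PosDefMap.inner_inv_apply {G : Type*} [Group G] {H : Type*} [NormedAddCommGroup H]
    [InnerProductSpace ℂ H] {ψ : G → H →L[ℂ] H} (hψ : PosDefMap ψ) (t : G) (a b : H) :
    (inner ℂ (ψ t⁻¹ a) b : ℂ) = conj (inner ℂ (ψ t b) a) := by
  -- the positive sums for `(1, t)` against `(a, b)` and `(a, i • b)` have zero imaginary part
  have ha := hψ 1 ![1] ![a]
  have hb := hψ 1 ![1] ![b]
  have hab := hψ 2 ![1, t] ![a, b]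
  have haIb := hψ 2 ![1, t] ![a, Complex.I • b]
  simp only [Fin.sum_univ_one, Fin.sum_univ_two, Matrix.cons_val_zero, Matrix.cons_val_one,
    inv_one, one_mul, mul_one, inv_mul_cancel, map_smul, inner_smul_left,
    inner_smul_right, Complex.conj_I] at ha hb hab haIb
  rw [Complex.le_def] at ha hb hab haIb
  simp only [Complex.zero_im, Complex.add_im, Complex.mul_im, Complex.mul_re, Complex.neg_re,
    Complex.neg_im, Complex.I_re, Complex.I_im] at ha hb hab haIb
  apply Complex.ext <;> simp only [Complex.conj_re, Complex.conj_im] <;>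
    linarith [ha.2, hb.2, hab.2, haIb.2]

namespace LinftyState

section State

variable {G : Type*} (τ : LinftyState G) {f g : G → ℂ}

lemma toFun_add (hf : IsBddFun f) (hg : IsBddFun g) :
    τ.toFun (fun y => f y + g y) = τ.toFun f + τ.toFun g :=
  τ.map_add f g hf hg

lemma toFun_const_mul (c : ℂ) (hf : IsBddFun f) :
    τ.toFun (fun y => c * f y) = c * τ.toFun f :=
  τ.map_smul c f hf

lemma toFun_const (c : ℂ) : τ.toFun (fun _ : G => c) = c := by
  simpa [τ.unital] using τ.toFun_const_mul c (IsBddFun.const 1)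

lemma toFun_sub (hf : IsBddFun f) (hg : IsBddFun g) :
    τ.toFun (fun y => f y - g y) = τ.toFun f - τ.toFun g := by
  calc τ.toFun (fun y => f y - g y) = τ.toFun (fun y => f y + -1 * g y) := by
        simp only [neg_one_mul, sub_eq_add_neg]
    _ = τ.toFun f - τ.toFun g := by
        rw [τ.toFun_add hf (hg.const_mul _), τ.toFun_const_mul _ hg]
        ring

lemma toFun_sum {ι : Type*} (s : Finset ι) {f : ι → G → ℂ} (h : ∀ i ∈ s, IsBddFun (f i)) :
    τ.toFun (fun y => ∑ i ∈ s, f i y) = ∑ i ∈ s, τ.toFun (f i) := by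
  classical
  induction s using Finset.induction_on with
  | empty => simpa using τ.toFun_const 0
  | insert a s ha ih =>
    have hs : ∀ i ∈ s, IsBddFun (f i) := fun i hi => h i (Finset.mem_insert_of_mem hi)
    simp only [Finset.sum_insert ha]
    rw [τ.toFun_add (h a (s.mem_insert_self a)) (IsBddFun.sum s hs), ih hs]

lemma norm_toFun_ofReal_le {g : G → ℝ} {C : ℝ} (hg : ∀ y, |g y| ≤ C) :
    ‖τ.toFun (fun y => (g y : ℂ))‖ ≤ C := by
  have hb : IsBddFun (fun y => (g y : ℂ)) := ⟨C, fun y => by simpa using hg y⟩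
  have hup : 0 ≤ (C : ℂ) - τ.toFun (fun y => (g y : ℂ)) := by
    rw [← τ.toFun_const (C : ℂ), ← τ.toFun_sub (IsBddFun.const _) hb]
    refine τ.pos _ ((IsBddFun.const _).sub hb) fun y => ?_
    exact_mod_cast sub_nonneg.mpr (abs_le.mp (hg y)).2
  have hlow : 0 ≤ (C : ℂ) + τ.toFun (fun y => (g y : ℂ)) := by
    rw [← τ.toFun_const (C : ℂ), ← τ.toFun_add (IsBddFun.const _) hb]
    refine τ.pos _ ((IsBddFun.const _).add hb) fun y => ?_
    exact_mod_cast neg_le_iff_add_nonneg'.mp (abs_le.mp (hg y)).1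
  rw [Complex.le_def] at hup hlow
  simp only [Complex.zero_re, Complex.zero_im, Complex.sub_re, Complex.sub_im, Complex.add_re,
    Complex.add_im, Complex.ofReal_re, Complex.ofReal_im] at hup hlow
  rw [← Complex.abs_re_eq_norm.mpr (by linarith), abs_le]
  constructor <;> linarith

lemma norm_toFun_le {C : ℝ} (hC : ∀ y, ‖f y‖ ≤ C) : ‖τ.toFun f‖ ≤ 2 * C := by
  have hre : ∀ y, |(f y).re| ≤ C := fun y => (Complex.abs_re_le_norm _).trans (hC y)
  have him : ∀ y, |(f y).im| ≤ C := fun y => (Complex.abs_im_le_norm _).trans (hC y)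
  have hbre : IsBddFun (fun y => ((f y).re : ℂ)) := ⟨C, fun y => by simpa using hre y⟩
  have hbim : IsBddFun (fun y => ((f y).im : ℂ)) := ⟨C, fun y => by simpa using him y⟩
  have hsplit : τ.toFun f = τ.toFun (fun y => ((f y).re : ℂ)) +
      Complex.I * τ.toFun (fun y => ((f y).im : ℂ)) := by
    rw [← τ.toFun_const_mul _ hbim, ← τ.toFun_add hbre (hbim.const_mul _)]
    simp only [mul_comm Complex.I, Complex.re_add_im]
  rw [hsplit]
  calc _ ≤ ‖τ.toFun (fun y => ((f y).re : ℂ))‖ + ‖τ.toFun (fun y => ((f y).im : ℂ))‖ := by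
        simpa using norm_add_le _ (Complex.I * τ.toFun (fun y => ((f y).im : ℂ)))
    _ ≤ 2 * C := by linarith [τ.norm_toFun_ofReal_le hre, τ.norm_toFun_ofReal_le him]

lemma exists_inner_apply_eq_toFun {H : Type*} [NormedAddCommGroup H] [InnerProductSpace ℂ H]
    [CompleteSpace H] {T : G → H →L[ℂ] H} {C : ℝ}
    (hT : ∀ y, ‖T y‖ ≤ C) :
    ∃ A : H →L[ℂ] H, ∀ ξ η : H,
      (inner ℂ (A ξ) η : ℂ) = τ.toFun (fun y => (inner ℂ (T y ξ) η : ℂ)) := by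
  have hb : ∀ ξ η : H, IsBddFun (fun y => (inner ℂ (T y ξ) η : ℂ)) :=
    fun ξ η => ⟨_, fun y => norm_inner_apply_le_of_opNorm_le (hT y) ξ η⟩
  let B : H →ₗ⋆[ℂ] H →ₗ[ℂ] ℂ := LinearMap.mk₂'ₛₗ (starRingEnd ℂ) (RingHom.id ℂ)
    (fun ξ η => τ.toFun (fun y => (inner ℂ (T y ξ) η : ℂ)))
    (fun ξ₁ ξ₂ η => by
      simp only [_root_.map_add, inner_add_left]
      exact τ.toFun_add (hb ξ₁ η) (hb ξ₂ η))
    (fun c ξ η => by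
      simp only [_root_.map_smul, inner_smul_left, smul_eq_mul]
      exact τ.toFun_const_mul _ (hb ξ η))
    (fun ξ η₁ η₂ => by
      simp only [inner_add_right]
      exact τ.toFun_add (hb ξ η₁) (hb ξ η₂))
    (fun c ξ η => by
      simp only [inner_smul_right, smul_eq_mul]
      exact τ.toFun_const_mul _ (hb ξ η))
  refine ⟨InnerProductSpace.continuousLinearMapOfBilin (B.mkContinuous₂ (2 * C) fun ξ η => ?_),
    fun ξ η => InnerProductSpace.continuousLinearMapOfBilin_apply _ ξ η⟩
  rw [mul_assoc, mul_assoc, ← mul_assoc C]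
  exact τ.norm_toFun_le fun y => norm_inner_apply_le_of_opNorm_le (hT y) ξ η

lemma toFun_conj_add_mul_add [Group G] (hf : IsBddFun f) (r : G) (t : ℝ) :
    τ.toFun (fun y => conj (f (r * y) + t) * (f y + t)) =
      τ.toFun (fun y => conj (f (r * y)) * f y) + t * τ.toFun f +
        t * τ.toFun (fun y => conj (f (r * y))) + t * t := by
  have hfr : IsBddFun (fun y => conj (f (r * y))) := (hf.comp _).star
  have hexp : (fun y => conj (f (r * y) + t) * (f y + t)) = fun y =>
      ((conj (f (r * y)) * f y + t * f y) + t * conj (f (r * y))) + t * t := by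
    funext y
    rw [_root_.map_add, Complex.conj_ofReal]
    ring
  rw [hexp, τ.toFun_add ((hfr.mul hf).add (hf.const_mul _) |>.add (hfr.const_mul _))
    (IsBddFun.const _), τ.toFun_add ((hfr.mul hf).add (hf.const_mul _)) (hfr.const_mul _),
    τ.toFun_add (hfr.mul hf) (hf.const_mul _), τ.toFun_const_mul _ hf,
    τ.toFun_const_mul _ hfr, τ.toFun_const]

end State

def IsLeftInvariant {G : Type*} [Group G] (τ : LinftyState G) : Prop :=
  ∀ (s : G) (f : G → ℂ), IsBddFun f → τ.toFun (fun x => f (s * x)) = τ.toFun f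

def HasPosDefAverages {G : Type*} [Group G] (τ : LinftyState G) (H : Type*)
    [NormedAddCommGroup H] [InnerProductSpace ℂ H] [CompleteSpace H] : Prop :=
  ∀ φ : G → H →L[ℂ] H, UnifBdd φ →
    ∃ ψ : G → H →L[ℂ] H, PosDefMap ψ ∧
      ∀ (x : G) (ξ η : H),
        (inner ℂ (((ContinuousLinearMap.adjoint (φ x)).comp (ψ x)) ξ) η : ℂ) =
          τ.toFun (fun y =>
            (inner ℂ (((ContinuousLinearMap.adjoint (φ x)).comp
              ((φ (x * y)).comp (ContinuousLinearMap.adjoint (φ y)))) ξ) η : ℂ))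

section Group

variable {G : Type*} [Group G] {τ : LinftyState G}

open ContinuousLinearMap in
lemma IsLeftInvariant.posDefMap {H : Type*} [NormedAddCommGroup H] [InnerProductSpace ℂ H]
    [CompleteSpace H] (hτ : τ.IsLeftInvariant) {φ : G → H →L[ℂ] H} {C : ℝ}
    (hφ : ∀ x, ‖φ x‖ ≤ C) {ψ : G → H →L[ℂ] H}
    (hψ : ∀ (x : G) (ξ η : H), (inner ℂ (ψ x ξ) η : ℂ) =
      τ.toFun (fun y => (inner ℂ ((φ (x * y) ∘L adjoint (φ y)) ξ) η : ℂ))) :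
    PosDefMap ψ := by
  intro n x ξ
  let g : Fin n → Fin n → G → ℂ := fun i j y =>
    inner ℂ ((φ ((x i)⁻¹ * y) ∘L adjoint (φ ((x j)⁻¹ * y))) (ξ j)) (ξ i)
  have hg : ∀ i j, IsBddFun (g i j) := fun i j =>
    ⟨_, fun y => norm_inner_apply_le_of_opNorm_le
      (norm_comp_adjoint_le hφ ((x i)⁻¹ * y) ((x j)⁻¹ * y)) (ξ j) (ξ i)⟩
  have hψg : ∀ i j, (inner ℂ (ψ ((x i)⁻¹ * x j) (ξ j)) (ξ i) : ℂ) = τ.toFun (g i j) := by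
    intro i j
    rw [hψ, ← hτ (x j) _ (hg i j)]
    simp only [g, mul_assoc, inv_mul_cancel_left]
  have hsq : ∀ y, ∑ i, ∑ j, g i j y =
      inner ℂ (∑ i, adjoint (φ ((x i)⁻¹ * y)) (ξ i)) (∑ i, adjoint (φ ((x i)⁻¹ * y)) (ξ i)) := by
    intro y
    rw [inner_sum]
    refine Finset.sum_congr rfl fun i _ => ?_
    rw [sum_inner]
    exact Finset.sum_congr rfl fun j _ => (adjoint_inner_right (φ ((x i)⁻¹ * y)) _ _).symm
  calc (0 : ℂ) ≤ τ.toFun (fun y => ∑ i, ∑ j, g i j y) :=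
        τ.pos _ (IsBddFun.sum _ fun i _ => IsBddFun.sum _ fun j _ => hg i j)
          fun y => by
            rw [hsq, inner_self_eq_norm_sq_to_K]
            exact pow_nonneg (RCLike.ofReal_nonneg.mpr (norm_nonneg _)) 2
    _ = ∑ i, ∑ j, (inner ℂ (ψ ((x i)⁻¹ * x j) (ξ j)) (ξ i) : ℂ) := by
        rw [τ.toFun_sum _ fun i _ => IsBddFun.sum _ fun j _ => hg i j]
        refine Finset.sum_congr rfl fun i _ => ?_
        rw [τ.toFun_sum _ fun j _ => hg i j]
        exact Finset.sum_congr rfl fun j _ => (hψg i j).symm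

open ContinuousLinearMap in
lemma IsLeftInvariant.hasPosDefAverages (hτ : τ.IsLeftInvariant) (H : Type*)
    [NormedAddCommGroup H] [InnerProductSpace ℂ H] [CompleteSpace H] : τ.HasPosDefAverages H := by
  rintro φ ⟨C, hφ⟩
  choose ψ hψ using fun x : G =>
    τ.exists_inner_apply_eq_toFun fun y => norm_comp_adjoint_le hφ (x * y) y
  refine ⟨ψ, hτ.posDefMap hφ hψ, fun x ξ η => ?_⟩
  simp only [comp_apply, adjoint_inner_left]
  exact hψ x ξ (φ x η)

open ContinuousLinearMap in
lemma HasPosDefAverages.toFun_conj_shift_mul (hτ : τ.HasPosDefAverages ℂ) {c : G → ℂ}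
    (hc : IsBddFun c) (hc0 : ∀ x, c x ≠ 0) (s : G) :
    τ.toFun (fun y => conj (c (s * y)) * c y) =
      conj (τ.toFun (fun y => conj (c (s⁻¹ * y)) * c y)) := by
  have hb : ∀ x, IsBddFun (fun y => conj (c (x * y)) * c y) := fun x => (hc.comp _).star.mul hc
  obtain ⟨C, hC⟩ := hc
  obtain ⟨ψ, hψ, hav⟩ := hτ (fun x => c x • ContinuousLinearMap.id ℂ ℂ)
    ⟨C, fun x => by rw [norm_smul, norm_id, mul_one]; exact hC x⟩
  have hconj : ∀ x, conj (ψ x 1) = τ.toFun (fun y => conj (c (x * y)) * c y) := by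
    intro x
    have h := hav x 1 1
    simp only [comp_apply, map_smulₛₗ, adjoint_id, smul_apply, id_apply,
      smul_eq_mul, RCLike.inner_apply, map_mul, Complex.conj_conj, one_mul, mul_one] at h
    exact mul_left_cancel₀ (hc0 x) (h.trans (τ.toFun_const_mul _ (hb x)))
  have hherm := hψ.inner_inv_apply s 1 1
  simp only [RCLike.inner_apply, one_mul] at hherm
  rw [← hconj, ← hconj, Complex.conj_conj]
  simpa using (congrArg conj hherm).symm

lemma HasPosDefAverages.toFun_add_toFun_conj_shift (hτ : τ.HasPosDefAverages ℂ) {f : G → ℂ}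
    (hf : IsBddFun f) (s : G) :
    τ.toFun f + τ.toFun (fun y => conj (f (s * y))) =
      conj (τ.toFun f) + conj (τ.toFun (fun y => conj (f (s⁻¹ * y)))) := by
  obtain ⟨C, hC⟩ := id hf
  have hne : ∀ t : ℝ, C < t → ∀ y, f y + t ≠ 0 := by
    intro t ht y hy
    have hfy := hC y
    rw [eq_neg_of_add_eq_zero_left hy, norm_neg, Complex.norm_real, Real.norm_eq_abs] at hfy
    linarith [le_abs_self t]
  have key : ∀ t : ℝ, C < t →
      τ.toFun (fun y => conj (f (s * y)) * f y) + t * τ.toFun f +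
          t * τ.toFun (fun y => conj (f (s * y))) + t * t =
        conj (τ.toFun (fun y => conj (f (s⁻¹ * y)) * f y)) + t * conj (τ.toFun f) +
          t * conj (τ.toFun (fun y => conj (f (s⁻¹ * y)))) + t * t := by
    intro t ht
    have h := hτ.toFun_conj_shift_mul (hf.add (IsBddFun.const t)) (hne t ht) s
    rw [τ.toFun_conj_add_mul_add hf, τ.toFun_conj_add_mul_add hf] at h
    simpa only [_root_.map_add, map_mul, Complex.conj_ofReal] using h
  have h1 := key (C + 1) (by linarith)
  have h2 := key (C + 2) (by linarith)
  push_cast at h1 h2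
  linear_combination h2 - h1

lemma HasPosDefAverages.toFun_conj_shift (hτ : τ.HasPosDefAverages ℂ) {f : G → ℂ}
    (hf : IsBddFun f) (s : G) :
    τ.toFun (fun y => conj (f (s * y))) = conj (τ.toFun f) := by
  have hconjI : ∀ r : G, τ.toFun (fun y => conj (Complex.I * f (r * y))) =
      -Complex.I * τ.toFun (fun y => conj (f (r * y))) := by
    intro r
    rw [← τ.toFun_const_mul _ (hf.comp _).star]
    simp only [map_mul, Complex.conj_I]
  have h1 := hτ.toFun_add_toFun_conj_shift hf s
  have h2 := hτ.toFun_add_toFun_conj_shift (hf.const_mul Complex.I) s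
  rw [τ.toFun_const_mul _ hf, hconjI, hconjI] at h2
  simp only [map_mul, map_neg, Complex.conj_I] at h2
  linear_combination (h1 + Complex.I * h2) / 2 -
    (τ.toFun f - τ.toFun (fun y => conj (f (s * y))) + conj (τ.toFun f) -
      conj (τ.toFun (fun y => conj (f (s⁻¹ * y))))) / 2 * Complex.I_sq

lemma HasPosDefAverages.isLeftInvariant (hτ : τ.HasPosDefAverages ℂ) : τ.IsLeftInvariant := by
  intro s f hf
  have hs := hτ.toFun_conj_shift hf.star s
  have h1 := hτ.toFun_conj_shift hf.star 1
  simp only [Complex.conj_conj, one_mul] at hs h1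
  rw [hs, ← h1]

end Group

end LinftyState

theorem stmt_11_general (G : Type*) [Group G] :
    Amenable G ↔
      ∃ τ : LinftyState G,
        ∀ (H : Type) [NormedAddCommGroup H] [InnerProductSpace ℂ H] [CompleteSpace H],
          ∀ φ : G → H →L[ℂ] H, UnifBdd φ →
            ∃ ψ : G → H →L[ℂ] H, PosDefMap ψ ∧
              ∀ (x : G) (ξ η : H),
                (inner ℂ (((ContinuousLinearMap.adjoint (φ x)).comp (ψ x)) ξ) η : ℂ) =
                  τ.toFun (fun y =>
                    (inner ℂ (((ContinuousLinearMap.adjoint (φ x)).comp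
                      ((φ (x * y)).comp (ContinuousLinearMap.adjoint (φ y)))) ξ) η : ℂ)) := by
  constructor
  · rintro ⟨τ, hτ⟩
    exact ⟨τ, fun H _ _ _ => LinftyState.IsLeftInvariant.hasPosDefAverages hτ H⟩
  · rintro ⟨τ, hτ⟩
    exact ⟨τ, LinftyState.HasPosDefAverages.isLeftInvariant (hτ ℂ)⟩

/-- Theorem 1.1 of the paper. A countable discrete group `G` is amenable
iff there is a state `τ` on `ℓ∞(G)` such that for every Hilbert space `H` and every
uniformly bounded `φ : G → B(H)` there is a positive definite `ψ : G → B(H)` with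
`⟨φ(x)* ψ(x) ξ, η⟩ = τ_y ⟨φ(x)* φ(xy) φ(y)* ξ, η⟩` for all `x ∈ G` and `ξ, η ∈ H`. -/
theorem stmt_11 (G : Type*) [Group G] [Countable G] :
    Amenable G ↔
      ∃ τ : LinftyState G,
        ∀ (H : Type) [NormedAddCommGroup H] [InnerProductSpace ℂ H] [CompleteSpace H],
          ∀ φ : G → H →L[ℂ] H, UnifBdd φ →
            ∃ ψ : G → H →L[ℂ] H, PosDefMap ψ ∧
              ∀ (x : G) (ξ η : H),
                (inner ℂ (((ContinuousLinearMap.adjoint (φ x)).comp (ψ x)) ξ) η : ℂ) =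
                  τ.toFun (fun y =>
                    (inner ℂ (((ContinuousLinearMap.adjoint (φ x)).comp
                      ((φ (x * y)).comp (ContinuousLinearMap.adjoint (φ y)))) ξ) η : ℂ)) :=
  stmt_11_general G
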